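/- (Schonmann's positive correlation inequality.) For all R, S ⊆ V, the Potts measure satisfies π(σ_v = 0 for all v ∈ R ∪ S) ≥ π(σ_v = 0 for all v ∈ R) · π(σ_v = 0 for all v ∈ S). -/

import Mathlib

open Finset

noncomputable section

variable {V : Type*} [Fintype V] [DecidableEq V]

/-- Kronecker delta `δ_{σ_x,σ_y}` for an unordered edge. -/
def edgeDelta {q : ℕ} (σ : V → Fin q) : Sym2 V → ℝ :=
  Sym2.lift ⟨fun x y => if σ x = σ y then 1 else 0,
    fun x y => by simp [eq_comm]⟩

/-- Boltzmann weight of a spin configuration for the `q`-state Potts model with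
couplings `J` on the edge set `E` and external field `h`. -/
def pottsWeight (q : ℕ) [NeZero q] (E : Finset (Sym2 V)) (J : Sym2 V → ℝ)
    (h : V → ℝ) (σ : V → Fin q) : ℝ :=
  Real.exp ((∑ e ∈ E, J e * edgeDelta σ e) +
    ∑ v : V, h v * (if σ v = 0 then 1 else 0))

/-- The partition function `Z`. -/
def pottsZ (q : ℕ) [NeZero q] (E : Finset (Sym2 V)) (J : Sym2 V → ℝ) (h : V → ℝ) : ℝ :=
  ∑ σ : V → Fin q, pottsWeight q E J h σ

/-- The Potts probability measure `π`. -/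
def pottsPMF (q : ℕ) [NeZero q] (E : Finset (Sym2 V)) (J : Sym2 V → ℝ) (h : V → ℝ)
    (σ : V → Fin q) : ℝ :=
  pottsWeight q E J h σ / pottsZ q E J h

/-- The mean `⟨f(σ)^R⟩ = Σ_σ π(σ) Π_{v ∈ R} f(σ_v)`. -/
def pottsMean (q : ℕ) [NeZero q] (E : Finset (Sym2 V)) (J : Sym2 V → ℝ) (h : V → ℝ)
    (f : Fin q → ℂ) (R : Finset V) : ℂ :=
  ∑ σ : V → Fin q, (pottsPMF q E J h σ : ℂ) * ∏ v ∈ R, f (σ v)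

/-- The mean `⟨f₀(σ)^R f₁(σ)^S⟩`. -/
def pottsMean2 (q : ℕ) [NeZero q] (E : Finset (Sym2 V)) (J : Sym2 V → ℝ) (h : V → ℝ)
    (f₀ f₁ : Fin q → ℂ) (R S : Finset V) : ℂ :=
  ∑ σ : V → Fin q, (pottsPMF q E J h σ : ℂ) *
    ((∏ v ∈ R, f₀ (σ v)) * ∏ v ∈ S, f₁ (σ v))

/-- `E(f(X)^m)` where `X` is uniformly distributed on `Fin q`. -/
def powerMean (q : ℕ) (f : Fin q → ℂ) (m : ℕ) : ℂ :=
  (∑ x : Fin q, f x ^ m) / q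

/-- The class `F_q`: all `f : Fin q → ℂ` such that every `E(f(X)^m)` is real and
nonnegative and `E(f(X)^{m+n}) ≥ E(f(X)^m)·E(f(X)^n)`. -/
def memF (q : ℕ) (f : Fin q → ℂ) : Prop :=
  (∀ m : ℕ, (powerMean q f m).im = 0 ∧ 0 ≤ (powerMean q f m).re) ∧
  ∀ m n : ℕ, (powerMean q f m).re * (powerMean q f n).re ≤ (powerMean q f (m + n)).re

/-- The class `F_q^0`: members of `F_q` with `f(0) = max{|f(x)| : x ∈ Q}`. -/
def memF0 (q : ℕ) [NeZero q] (f : Fin q → ℂ) : Prop :=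
  memF q f ∧ f 0 = (‖f 0‖ : ℂ) ∧
    ∀ x : Fin q, ‖f x‖ ≤ ‖f 0‖


/-!
The field `h_v` is the coupling of `v` to a ghost vertex whose spin is pinned to `0`, so every
probability in the statement is a ratio of zero-field partition functions `Z_T` with the spins
pinned to `0` on a set `T` containing the ghost. The Fortuin–Kasteleyn expansion writes
`Z_T = ∑_P w(P) q^{k(P)} q^{-m_T(P)}` over edge sets `P`, where `k(P)` counts the clusters of `P`
and `m_T(P)` those meeting `T`. Since `k` is supermodular, `w(P) q^{k(P)}` is log-supermodular,
and `P ↦ q^{-m_T(P)}` is increasing, so the FKG inequality applies. The clusters meeting `T₁` and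
those meeting `T₂` share the ghost's cluster, so `m_{T₁ ∪ T₂} + 1 ≤ m_{T₁} + m_{T₂}`, and FKG
yields `Z_{T₁} Z_{T₂} ≤ Z_{ghost} Z_{T₁ ∪ T₂}`.
-/

namespace Potts

open Function

section Clusters

variable {X : Type*} {P Q : Finset (Sym2 X)}

def Cluster (P : Finset (Sym2 X)) : Type _ := Quot fun x y : X => s(x, y) ∈ P

def cluster (P : Finset (Sym2 X)) : X → Cluster P := Quot.mk _

instance [Finite X] (P : Finset (Sym2 X)) : Finite (Cluster P) := Quot.finite _

def numClusters (P : Finset (Sym2 X)) : ℕ := Nat.card (Cluster P)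

def numClustersMeeting (P : Finset (Sym2 X)) (T : Finset X) : ℕ := (cluster P '' T).ncard

lemma cluster_surjective (P : Finset (Sym2 X)) : Surjective (cluster P) := Quot.mk_surjective

lemma cluster_eq_of_mem {x y : X} (h : s(x, y) ∈ P) : cluster P x = cluster P y := Quot.sound h

def Cluster.map (h : P ⊆ Q) : Cluster P → Cluster Q := Quot.mapRight fun _ _ hxy => h hxy

@[simp] lemma Cluster.map_cluster (h : P ⊆ Q) (x : X) : Cluster.map h (cluster P x) = cluster Q x :=
  rfl

lemma Cluster.map_surjective (h : P ⊆ Q) : Surjective (Cluster.map h) := by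
  intro c
  obtain ⟨x, rfl⟩ := cluster_surjective Q c
  exact ⟨cluster P x, rfl⟩

lemma numClusters_anti [Finite X] (h : P ⊆ Q) : numClusters Q ≤ numClusters P :=
  Nat.card_le_card_of_surjective _ (Cluster.map_surjective h)

section InsertEdge

variable [DecidableEq X] {a b : X}

lemma cluster_insert_eq_iff {x y : X} :
    cluster (insert s(a, b) P) x = cluster (insert s(a, b) P) y ↔
      cluster P x = cluster P y ∨ (cluster P x = cluster P a ∧ cluster P b = cluster P y) ∨
        (cluster P x = cluster P b ∧ cluster P a = cluster P y) := by
  constructor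
  · intro h
    replace h := Quot.eqvGen_exact h
    induction h with
    | rel u v huv =>
      rcases Finset.mem_insert.1 huv with he | he
      · rcases Sym2.eq_iff.1 he with ⟨rfl, rfl⟩ | ⟨rfl, rfl⟩ <;> simp
      · exact Or.inl (cluster_eq_of_mem he)
    | refl => exact Or.inl rfl
    | symm _ _ _ ih => grind
    | trans _ _ _ _ _ ih₁ ih₂ => grind
  · have hab : cluster (insert s(a, b) P) a = cluster (insert s(a, b) P) b :=
      cluster_eq_of_mem (Finset.mem_insert_self _ _)
    have hmap := fun {x y : X} (hxy : cluster P x = cluster P y) =>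
      congrArg (Cluster.map (Finset.subset_insert s(a, b) P)) hxy
    simp only [Cluster.map_cluster] at hmap
    rintro (h | ⟨h₁, h₂⟩ | ⟨h₁, h₂⟩)
    · exact hmap h
    · exact (hmap h₁).trans (hab.trans (hmap h₂))
    · exact (hmap h₁).trans (hab.symm.trans (hmap h₂))

lemma numClusters_insert_of_cluster_eq [Finite X] (hab : cluster P a = cluster P b) :
    numClusters (insert s(a, b) P) = numClusters P := by
  refine (Nat.card_eq_of_bijective _ ⟨?_, Cluster.map_surjective (Finset.subset_insert _ P)⟩).symm
  intro c d hcd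
  obtain ⟨x, rfl⟩ := cluster_surjective P c
  obtain ⟨y, rfl⟩ := cluster_surjective P d
  simp only [Cluster.map_cluster, cluster_insert_eq_iff] at hcd
  grind

lemma numClusters_insert_lt [Finite X] (hab : cluster P a ≠ cluster P b) :
    numClusters (insert s(a, b) P) < numClusters P := by
  by_contra! hle
  have hbij :=
    (Cluster.map_surjective (Finset.subset_insert s(a, b) P)).bijective_of_nat_card_le hle
  exact hab (hbij.injective (cluster_eq_of_mem (Finset.mem_insert_self _ _)))

lemma numClusters_le_insert_add_one [Finite X] :
    numClusters P ≤ numClusters (insert s(a, b) P) + 1 := by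
  refine (Cluster.map_surjective (Finset.subset_insert s(a, b) P)).card_le_card_add_one_iff.2 ?_
  have key : ∀ c d : Cluster P, Cluster.map (Finset.subset_insert s(a, b) P) c =
      Cluster.map (Finset.subset_insert s(a, b) P) d → c ≠ d →
      ({c, d} : Set (Cluster P)) = {cluster P a, cluster P b} := by
    intro c d hcd hne
    obtain ⟨x, rfl⟩ := cluster_surjective P c
    obtain ⟨y, rfl⟩ := cluster_surjective P d
    simp only [Cluster.map_cluster, cluster_insert_eq_iff] at hcd
    rcases hcd with h | ⟨h₁, h₂⟩ | ⟨h₁, h₂⟩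
    · exact absurd h hne
    · rw [h₁, ← h₂]
    · rw [h₁, ← h₂, Set.pair_comm]
  intro c d c' d' h h' hne hne'
  rw [key c d h hne, key c' d' h' hne']

end InsertEdge

-- An edge merges at most two clusters, and it merges two of `P` whenever it merges two of `Q ⊇ P`.
lemma numClusters_insert_add_le [Finite X] [DecidableEq X] (h : P ⊆ Q) (e : Sym2 X) :
    numClusters (insert e P) + numClusters Q ≤ numClusters (insert e Q) + numClusters P := by
  induction e using Sym2.ind with
  | _ a b =>
    by_cases hQ : cluster Q a = cluster Q b
    · rw [numClusters_insert_of_cluster_eq hQ]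
      have := numClusters_anti (Finset.subset_insert s(a, b) P)
      omega
    · have hP : cluster P a ≠ cluster P b := fun hP => hQ (by
        simpa using congrArg (Cluster.map h) hP)
      have := numClusters_insert_lt hP
      have := numClusters_le_insert_add_one (P := Q) (a := a) (b := b)
      omega

lemma numClusters_union_add_le [Finite X] [DecidableEq X] {B C : Finset (Sym2 X)} (h : C ⊆ B)
    (D : Finset (Sym2 X)) :
    numClusters (C ∪ D) + numClusters B ≤ numClusters (B ∪ D) + numClusters C := by
  induction D using Finset.induction_on with
  | empty => simp [add_comm]
  | insert e D _ ih =>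
    have := numClusters_insert_add_le (Finset.union_subset_union_left h (t := D)) e
    simp only [Finset.union_insert]
    omega

lemma numClusters_add_le [Finite X] [DecidableEq X] (A B : Finset (Sym2 X)) :
    numClusters A + numClusters B ≤ numClusters (A ∪ B) + numClusters (A ∩ B) := by
  have := numClusters_union_add_le (Finset.inter_subset_right (s₁ := A) (s₂ := B)) A
  rwa [Finset.union_eq_right.2 Finset.inter_subset_left, Finset.union_comm B] at this

lemma numClustersMeeting_anti (T : Finset X) (h : P ⊆ Q) :
    numClustersMeeting Q T ≤ numClustersMeeting P T := by
  have : cluster Q '' T = Cluster.map h '' (cluster P '' T) := by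
    rw [Set.image_image]; rfl
  rw [numClustersMeeting, numClustersMeeting, this]
  exact Set.ncard_image_le ((T.finite_toSet).image _)

lemma numClustersMeeting_singleton (u : X) : numClustersMeeting P {u} = 1 := by
  simp [numClustersMeeting]

lemma numClustersMeeting_union_add_one_le [DecidableEq X] {T₁ T₂ : Finset X} {u : X}
    (h₁ : u ∈ T₁) (h₂ : u ∈ T₂) :
    numClustersMeeting P (T₁ ∪ T₂) + 1 ≤ numClustersMeeting P T₁ + numClustersMeeting P T₂ := by
  have hfin : ∀ T : Finset X, (cluster P '' T).Finite := fun T => T.finite_toSet.image _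
  have hinter : 1 ≤ (cluster P '' T₁ ∩ cluster P '' T₂).ncard :=
    (Set.ncard_pos ((hfin T₁).inter_of_left _)).2
      ⟨cluster P u, Set.mem_image_of_mem _ h₁, Set.mem_image_of_mem _ h₂⟩
  have := Set.ncard_union_add_ncard_inter _ _ (hfin T₁) (hfin T₂)
  rw [numClustersMeeting, numClustersMeeting, numClustersMeeting, Finset.coe_union,
    Set.image_union]
  omega

end Clusters

section Counting

variable {X : Type*} {q : ℕ}

lemma edgeDelta_mk (τ : X → Fin q) (x y : X) :
    edgeDelta τ s(x, y) = if τ x = τ y then 1 else 0 := rfl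

lemma prod_edgeDelta_comp_cluster (P : Finset (Sym2 X)) (g : Cluster P → Fin q) :
    ∏ e ∈ P, edgeDelta (g ∘ cluster P) e = 1 := by
  refine Finset.prod_eq_one fun e he => ?_
  induction e using Sym2.ind with
  | _ x y => simp [edgeDelta_mk, cluster_eq_of_mem he]

lemma exists_comp_cluster_of_prod_edgeDelta_ne_zero {P : Finset (Sym2 X)} {τ : X → Fin q}
    (h : ∏ e ∈ P, edgeDelta τ e ≠ 0) : ∃ g : Cluster P → Fin q, g ∘ cluster P = τ := by
  refine ⟨Quot.lift τ fun x y hxy => ?_, rfl⟩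
  by_contra hne
  exact h (Finset.prod_eq_zero hxy (by simp [edgeDelta_mk, hne]))

lemma card_forall_mem_eq_zero [NeZero q] (C : Type*) [Finite C] (s : Set C) :
    Nat.card {g : C → Fin q // ∀ c ∈ s, g c = 0} = q ^ sᶜ.ncard := by
  classical
  let e : {g : C → Fin q // ∀ c ∈ s, g c = 0} ≃ (↥sᶜ → Fin q) :=
    { toFun := fun g c => g.1 c
      invFun := fun f => ⟨fun c => if h : c ∈ s then 0 else f ⟨c, h⟩, fun c hc => dif_pos hc⟩
      left_inv := fun g => by
        ext c
        by_cases hc : c ∈ s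
        · simp [hc, g.2 c hc]
        · simp [hc]
      right_inv := fun f => by
        funext c
        exact dif_neg c.2 }
  rw [Nat.card_congr e, Nat.card_fun, Nat.card_eq_fintype_card, Fintype.card_fin,
    Nat.card_coe_set_eq]

lemma exp_mul_edgeDelta (K : ℝ) (τ : X → Fin q) (e : Sym2 X) :
    Real.exp (K * edgeDelta τ e) = 1 + (Real.exp K - 1) * edgeDelta τ e := by
  induction e using Sym2.ind with
  | _ x y => by_cases hxy : τ x = τ y <;> simp [edgeDelta_mk, hxy]

lemma sum_pinned_prod_edgeDelta [Fintype X] [DecidableEq X] [NeZero q] (T : Finset X)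
    (P : Finset (Sym2 X)) :
    ∑ τ : X → Fin q, (if ∀ x ∈ T, τ x = 0 then ∏ e ∈ P, edgeDelta τ e else 0) =
      (q : ℝ) ^ (cluster P '' T)ᶜ.ncard := by
  classical
  have := Fintype.ofFinite (Cluster P)
  rw [← Nat.cast_pow, ← card_forall_mem_eq_zero, Nat.card_eq_fintype_card, Fintype.card_subtype,
    ← Finset.sum_boole]
  symm
  refine Fintype.sum_of_injective (· ∘ cluster P) (cluster_surjective P).injective_comp_right _ _
    (fun τ hτ => ?_) (fun g => ?_)
  · have hprod : ∏ e ∈ P, edgeDelta τ e = 0 := by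
      by_contra h
      exact hτ (exists_comp_cluster_of_prod_edgeDelta_ne_zero h)
    simp [hprod]
  · simp [prod_edgeDelta_comp_cluster]

end Counting

section RandomCluster

variable {X : Type*} (q : ℕ)

def pinnedZ [Fintype X] [DecidableEq X] [NeZero q] (E : Finset (Sym2 X)) (J : Sym2 X → ℝ)
    (h : X → ℝ) (T : Finset X) : ℝ :=
  ∑ σ : X → Fin q, if ∀ x ∈ T, σ x = 0 then pottsWeight q E J h σ else 0

lemma pottsWeight_zero_field [Fintype X] [NeZero q] (F : Finset (Sym2 X)) (K : Sym2 X → ℝ)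
    (τ : X → Fin q) :
    pottsWeight q F K 0 τ = ∏ e ∈ F, (1 + (Real.exp (K e) - 1) * edgeDelta τ e) := by
  simp [pottsWeight, Real.exp_sum, exp_mul_edgeDelta]

lemma pinnedZ_zero_field_eq_sum [Fintype X] [DecidableEq X] [NeZero q] (F : Finset (Sym2 X))
    (K : Sym2 X → ℝ) (T : Finset X) :
    pinnedZ q F K 0 T =
      ∑ P ∈ F.powerset, (∏ e ∈ P, (Real.exp (K e) - 1)) * (q : ℝ) ^ (cluster P '' T)ᶜ.ncard := by
  have hexpand : ∀ τ : X → Fin q, (if ∀ x ∈ T, τ x = 0 then pottsWeight q F K 0 τ else 0) =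
      ∑ P ∈ F.powerset, (∏ e ∈ P, (Real.exp (K e) - 1)) *
        (if ∀ x ∈ T, τ x = 0 then ∏ e ∈ P, edgeDelta τ e else 0) := by
    intro τ
    split_ifs
    · simp [pottsWeight_zero_field, Finset.prod_one_add, Finset.prod_mul_distrib]
    · simp
  simp_rw [pinnedZ, hexpand]
  rw [Finset.sum_comm]
  simp_rw [← Finset.mul_sum, sum_pinned_prod_edgeDelta]

-- Extended by `0` beyond the subsets of `F`, so that FKG applies on the lattice of all edge sets.
def randomClusterWeight [DecidableEq X] (F : Finset (Sym2 X)) (K : Sym2 X → ℝ)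
    (P : Finset (Sym2 X)) : ℝ :=
  if P ⊆ F then (∏ e ∈ P, (Real.exp (K e) - 1)) * (q : ℝ) ^ numClusters P else 0

lemma pinnedZ_zero_field_eq_sum_randomClusterWeight [Fintype X] [DecidableEq X] [NeZero q]
    (F : Finset (Sym2 X)) (K : Sym2 X → ℝ) (T : Finset X) :
    pinnedZ q F K 0 T =
      ∑ P, randomClusterWeight q F K P * ((q : ℝ)⁻¹) ^ numClustersMeeting P T := by
  have hq : (q : ℝ) ≠ 0 := Nat.cast_ne_zero.2 (NeZero.ne q)
  have hpow : ∀ P : Finset (Sym2 X), (q : ℝ) ^ (cluster P '' T)ᶜ.ncard =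
      (q : ℝ) ^ numClusters P * ((q : ℝ)⁻¹) ^ numClustersMeeting P T := by
    intro P
    rw [numClusters, ← Set.ncard_add_ncard_compl (cluster P '' T), numClustersMeeting, pow_add,
      mul_right_comm, ← mul_pow, mul_inv_cancel₀ hq, one_pow, one_mul]
  simp_rw [pinnedZ_zero_field_eq_sum, randomClusterWeight, ite_mul, zero_mul,
    ← Finset.sum_filter, hpow, mul_assoc]
  congr 1
  ext P
  simp

lemma prod_exp_sub_one_nonneg {F P : Finset (Sym2 X)} {K : Sym2 X → ℝ} (hK : ∀ e ∈ F, 0 ≤ K e)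
    (hP : P ⊆ F) : 0 ≤ ∏ e ∈ P, (Real.exp (K e) - 1) :=
  Finset.prod_nonneg fun e he => by simpa using Real.one_le_exp (hK e (hP he))

lemma randomClusterWeight_nonneg [DecidableEq X] {F : Finset (Sym2 X)} {K : Sym2 X → ℝ}
    (hK : ∀ e ∈ F, 0 ≤ K e) : 0 ≤ randomClusterWeight q F K := by
  intro P
  unfold randomClusterWeight
  split_ifs with hP
  · exact mul_nonneg (prod_exp_sub_one_nonneg hK hP) (by positivity)
  · exact le_rfl

lemma randomClusterWeight_mul_le [Finite X] [DecidableEq X] [NeZero q] {F : Finset (Sym2 X)}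
    {K : Sym2 X → ℝ} (hK : ∀ e ∈ F, 0 ≤ K e) (P Q : Finset (Sym2 X)) :
    randomClusterWeight q F K P * randomClusterWeight q F K Q ≤
      randomClusterWeight q F K (P ⊓ Q) * randomClusterWeight q F K (P ⊔ Q) := by
  by_cases hPQ : P ⊆ F ∧ Q ⊆ F
  · have hq : (1 : ℝ) ≤ q := Nat.one_le_cast.2 NeZero.one_le
    have hpow : (q : ℝ) ^ numClusters P * (q : ℝ) ^ numClusters Q ≤
        (q : ℝ) ^ numClusters (P ∩ Q) * (q : ℝ) ^ numClusters (P ∪ Q) := by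
      rw [← pow_add, ← pow_add, add_comm (numClusters (P ∩ Q))]
      exact pow_le_pow_right₀ hq (numClusters_add_le P Q)
    have hinter : P ∩ Q ⊆ F := Finset.inter_subset_left.trans hPQ.1
    have hunion : P ∪ Q ⊆ F := Finset.union_subset hPQ.1 hPQ.2
    have hprod := Finset.prod_union_inter (s₁ := P) (s₂ := Q) (f := fun e => Real.exp (K e) - 1)
    have hnonneg := mul_nonneg (prod_exp_sub_one_nonneg hK hunion)
      (prod_exp_sub_one_nonneg hK hinter)
    simp only [randomClusterWeight, Finset.inf_eq_inter, Finset.sup_eq_union, if_pos hPQ.1,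
      if_pos hPQ.2, if_pos hinter, if_pos hunion]
    calc _ = ((∏ e ∈ P ∪ Q, (Real.exp (K e) - 1)) * ∏ e ∈ P ∩ Q, (Real.exp (K e) - 1)) *
          ((q : ℝ) ^ numClusters P * (q : ℝ) ^ numClusters Q) := by rw [hprod]; ring
      _ ≤ ((∏ e ∈ P ∪ Q, (Real.exp (K e) - 1)) * ∏ e ∈ P ∩ Q, (Real.exp (K e) - 1)) *
          ((q : ℝ) ^ numClusters (P ∩ Q) * (q : ℝ) ^ numClusters (P ∪ Q)) :=
        mul_le_mul_of_nonneg_left hpow hnonneg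
      _ = _ := by ring
  · have hzero : randomClusterWeight q F K P * randomClusterWeight q F K Q = 0 := by
      rcases not_and_or.1 hPQ with h | h <;> simp [randomClusterWeight, h]
    rw [hzero]
    exact mul_nonneg (randomClusterWeight_nonneg q hK _) (randomClusterWeight_nonneg q hK _)

theorem pinnedZ_mul_pinnedZ_le [Fintype X] [DecidableEq X] [NeZero q] {F : Finset (Sym2 X)}
    {K : Sym2 X → ℝ} (hK : ∀ e ∈ F, 0 ≤ K e) {T₁ T₂ : Finset X} {u : X} (h₁ : u ∈ T₁)
    (h₂ : u ∈ T₂) :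
    pinnedZ q F K 0 T₁ * pinnedZ q F K 0 T₂ ≤ pinnedZ q F K 0 {u} * pinnedZ q F K 0 (T₁ ∪ T₂) := by
  set μ := randomClusterWeight q F K
  set f : Finset X → Finset (Sym2 X) → ℝ := fun T P => (q : ℝ)⁻¹ ^ numClustersMeeting P T
  have hq₀ : 0 ≤ (q : ℝ)⁻¹ := by positivity
  have hq₁ : (q : ℝ)⁻¹ ≤ 1 := inv_le_one_of_one_le₀ (Nat.one_le_cast.2 NeZero.one_le)
  have hf_nonneg (T : Finset X) : 0 ≤ f T := fun P => pow_nonneg hq₀ _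
  have hf_mono (T : Finset X) : Monotone (f T) := fun P Q hPQ =>
    pow_le_pow_of_le_one hq₀ hq₁ (numClustersMeeting_anti T hPQ)
  have hf_mul (P : Finset (Sym2 X)) : f T₁ P * f T₂ P ≤ (q : ℝ)⁻¹ * f (T₁ ∪ T₂) P := by
    rw [← pow_add, ← pow_succ']
    exact pow_le_pow_of_le_one hq₀ hq₁ (by
      have := numClustersMeeting_union_add_one_le (P := P) h₁ h₂
      omega)
  have hμ := randomClusterWeight_nonneg q hK
  simp only [pinnedZ_zero_field_eq_sum_randomClusterWeight, numClustersMeeting_singleton, pow_one]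
  calc _ ≤ (∑ P, μ P) * ∑ P, μ P * (f T₁ P * f T₂ P) :=
        fkg _ _ _ hμ (hf_nonneg T₁) (hf_nonneg T₂) (hf_mono T₁) (hf_mono T₂)
          (randomClusterWeight_mul_le q hK)
    _ ≤ (∑ P, μ P) * ∑ P, μ P * ((q : ℝ)⁻¹ * f (T₁ ∪ T₂) P) := by
        refine mul_le_mul_of_nonneg_left (Finset.sum_le_sum fun P _ => ?_)
          (Finset.sum_nonneg fun P _ => hμ P)
        exact mul_le_mul_of_nonneg_left (hf_mul P) (hμ P)
    _ = _ := by
        simp only [← Finset.sum_mul, mul_left_comm _ (q : ℝ)⁻¹, ← Finset.mul_sum]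
        ring

end RandomCluster

section GhostVertex

variable {V : Type*}

-- The ghost vertex is `none`, joined to every vertex of `V`.
def ghostEdges [Fintype V] [DecidableEq V] (E : Finset (Sym2 V)) : Finset (Sym2 (Option V)) :=
  E.image (Sym2.map some) ∪ Finset.univ.image fun v => s(none, some v)

def ghostCoupling (J : Sym2 V → ℝ) (h : V → ℝ) : Sym2 (Option V) → ℝ :=
  Sym2.lift ⟨fun x y => match x, y with
    | some a, some b => J s(a, b)
    | some a, none | none, some a => h a
    | none, none => 0, by rintro (_ | a) (_ | b) <;> simp [Sym2.eq_swap]⟩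

lemma ghostCoupling_nonneg [Fintype V] [DecidableEq V] {E : Finset (Sym2 V)} {J : Sym2 V → ℝ}
    {h : V → ℝ} (hJ : ∀ e ∈ E, 0 ≤ J e) (hh : ∀ v, 0 ≤ h v) :
    ∀ e ∈ ghostEdges E, 0 ≤ ghostCoupling J h e := by
  intro e he
  rcases Finset.mem_union.1 he with he | he
  · obtain ⟨e, he', rfl⟩ := Finset.mem_image.1 he
    induction e using Sym2.ind with
    | _ a b => exact hJ _ he'
  · obtain ⟨v, -, rfl⟩ := Finset.mem_image.1 he
    exact hh v

lemma pottsWeight_eq_ghost [Fintype V] [DecidableEq V] (q : ℕ) [NeZero q] (E : Finset (Sym2 V))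
    (J : Sym2 V → ℝ) (h : V → ℝ) (σ : V → Fin q) :
    pottsWeight q E J h σ =
      pottsWeight q (ghostEdges E) (ghostCoupling J h) 0 (Option.elim' 0 σ) := by
  have hdisj : Disjoint (E.image (Sym2.map some))
      (Finset.univ.image fun v : V => (s(none, some v) : Sym2 (Option V))) := by
    simp only [Finset.disjoint_left, Finset.mem_image]
    rintro _ ⟨e, -, rfl⟩ ⟨v, -, hv⟩
    induction e using Sym2.ind with
    | _ a b => simp at hv
  have hghost : Function.Injective fun v : V => (s(none, some v) : Sym2 (Option V)) :=
    fun v w hvw => by simpa using hvw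
  rw [pottsWeight, pottsWeight, ghostEdges, Finset.sum_union hdisj,
    Finset.sum_image (Sym2.map.injective (Option.some_injective V)).injOn,
    Finset.sum_image hghost.injOn]
  congr 1
  simp only [Pi.zero_apply, zero_mul, Finset.sum_const_zero, add_zero]
  congr 1
  · refine Finset.sum_congr rfl fun e _ => ?_
    induction e using Sym2.ind with
    | _ a b => rfl
  · refine Finset.sum_congr rfl fun v _ => ?_
    simp [ghostCoupling, edgeDelta_mk, eq_comm]

lemma pinnedZ_eq_ghost [Fintype V] [DecidableEq V] (q : ℕ) [NeZero q] (E : Finset (Sym2 V))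
    (J : Sym2 V → ℝ) (h : V → ℝ) (T : Finset V) :
    pinnedZ q E J h T = pinnedZ q (ghostEdges E) (ghostCoupling J h) 0 T.insertNone := by
  refine Fintype.sum_of_injective (Option.elim' 0) (fun σ τ hστ => funext fun v =>
    congrFun hστ (some v)) _ _ (fun τ hτ => ?_) (fun σ => ?_)
  · have hnone : τ none ≠ 0 := fun h0 => hτ ⟨τ ∘ some, funext fun o => by cases o <;> simp [h0]⟩
    exact if_neg fun hT => hnone (hT none Finset.none_mem_insertNone)
  · have hT : (∀ o ∈ T.insertNone, Option.elim' 0 σ o = 0) ↔ ∀ v ∈ T, σ v = 0 := by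
      rw [Finset.forall_mem_insertNone]
      simp
    exact if_congr hT.symm (pottsWeight_eq_ghost q E J h σ) rfl

lemma pottsZ_pos [Fintype V] [DecidableEq V] (q : ℕ) [NeZero q] (E : Finset (Sym2 V))
    (J : Sym2 V → ℝ) (h : V → ℝ) : 0 < pottsZ q E J h :=
  Finset.sum_pos (fun _ _ => Real.exp_pos _) Finset.univ_nonempty

lemma pottsZ_eq_pinnedZ_empty [Fintype V] [DecidableEq V] (q : ℕ) [NeZero q]
    (E : Finset (Sym2 V)) (J : Sym2 V → ℝ) (h : V → ℝ) : pottsZ q E J h = pinnedZ q E J h ∅ := by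
  simp [pottsZ, pinnedZ]

lemma sum_ite_pottsPMF [Fintype V] [DecidableEq V] (q : ℕ) [NeZero q] (E : Finset (Sym2 V))
    (J : Sym2 V → ℝ) (h : V → ℝ) (T : Finset V) :
    ∑ σ : V → Fin q, (if ∀ v ∈ T, σ v = 0 then pottsPMF q E J h σ else 0) =
      pinnedZ q E J h T / pottsZ q E J h := by
  simp [pinnedZ, pottsPMF, Finset.sum_div, ite_div]

theorem pinnedZ_mul_pinnedZ_le_pottsZ_mul [Fintype V] [DecidableEq V] (q : ℕ) [NeZero q]
    {E : Finset (Sym2 V)} {J : Sym2 V → ℝ} {h : V → ℝ} (hJ : ∀ e ∈ E, 0 ≤ J e)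
    (hh : ∀ v, 0 ≤ h v) (R S : Finset V) :
    pinnedZ q E J h R * pinnedZ q E J h S ≤ pottsZ q E J h * pinnedZ q E J h (R ∪ S) := by
  have hempty : (∅ : Finset V).insertNone = {none} := by ext (_ | v) <;> simp
  have hunion : (R ∪ S).insertNone = R.insertNone ∪ S.insertNone := by ext (_ | v) <;> simp
  rw [pottsZ_eq_pinnedZ_empty, pinnedZ_eq_ghost q E J h R, pinnedZ_eq_ghost q E J h S,
    pinnedZ_eq_ghost q E J h ∅, pinnedZ_eq_ghost q E J h (R ∪ S), hempty, hunion]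
  exact pinnedZ_mul_pinnedZ_le q (ghostCoupling_nonneg hJ hh) Finset.none_mem_insertNone
    Finset.none_mem_insertNone

end GhostVertex

end Potts

open Potts

theorem schonmann_positive_general
    (q : ℕ) [NeZero q]
    (E : Finset (Sym2 V))
    (J : Sym2 V → ℝ) (hJ : ∀ e ∈ E, 0 ≤ J e)
    (h : V → ℝ) (hh : ∀ v : V, 0 ≤ h v)
    (R S : Finset V) :
    (∑ σ : V → Fin q, if ∀ v ∈ R, σ v = 0 then pottsPMF q E J h σ else 0) *
      (∑ σ : V → Fin q, if ∀ v ∈ S, σ v = 0 then pottsPMF q E J h σ else 0) ≤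
    ∑ σ : V → Fin q, if ∀ v ∈ R ∪ S, σ v = 0 then pottsPMF q E J h σ else 0 := by
  have hZ := pottsZ_pos q E J h
  simp only [sum_ite_pottsPMF]
  calc _ = pinnedZ q E J h R * pinnedZ q E J h S / pottsZ q E J h / pottsZ q E J h := by ring
    _ ≤ pottsZ q E J h * pinnedZ q E J h (R ∪ S) / pottsZ q E J h / pottsZ q E J h := by
      gcongr ?_ / _ / _
      exact pinnedZ_mul_pinnedZ_le_pottsZ_mul q hJ hh R S
    _ = _ := by field_simp

/-- Schonmann's positive correlation inequality:
`π(σ = 0 on R ∪ S) ≥ π(σ = 0 on R) · π(σ = 0 on S)`. -/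
theorem schonmann_positive
    (q : ℕ) [NeZero q] (hq : 2 ≤ q)
    (E : Finset (Sym2 V)) (hE : ∀ e ∈ E, ¬ e.IsDiag)
    (J : Sym2 V → ℝ) (hJ : ∀ e ∈ E, 0 ≤ J e)
    (h : V → ℝ) (hh : ∀ v : V, 0 ≤ h v)
    (R S : Finset V) :
    (∑ σ : V → Fin q, if ∀ v ∈ R, σ v = 0 then pottsPMF q E J h σ else 0) *
      (∑ σ : V → Fin q, if ∀ v ∈ S, σ v = 0 then pottsPMF q E J h σ else 0) ≤
    ∑ σ : V → Fin q, if ∀ v ∈ R ∪ S, σ v = 0 then pottsPMF q E J h σ else 0 :=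
  schonmann_positive_general q E J hJ h hh R S
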